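/- For each i in {p, p+1, ..., m-1}, P_i (I - e_{i+1}e_{i+1}^T + d_{i+1}e_{i+1}^T) ⋯ (I - e_m e_m^T + d_m e_m^T) = P_i (I + d_{i+1}e_{i+1}^T) ⋯ (I + d_m e_m^T), proved by downward induction on i starting from i = m-1, using that P_{i-1} P_i = P_{i-1}, e_i^T P_i = e_i^T, and P_{i-1} e_i = 0. -/

import Mathlib

/-!
Since `P_i e_k = 0` for every `k ≥ i`, the term `-e_k e_kᵀ` of each factor is annihilated by
whatever stands to its left: a matrix `M` with `M e_k = 0` satisfies
`M (I - e_k e_kᵀ + d_k e_kᵀ) = M (I + d_k e_kᵀ)`, and right multiplication by `I + d_k e_kᵀ`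
changes only the `k`-th column, so `M (I + d_k e_kᵀ) e_j = M e_j = 0` for the later indices `j ≠ k`.
-/

def outerProd {m : ℕ} (u v : Fin m → ℝ) : Matrix (Fin m) (Fin m) ℝ :=
  fun i j => u i * v j

def canonBasis {m : ℕ} (k : Fin m) : Fin m → ℝ := fun i => if i = k then 1 else 0

def projMat (m i : ℕ) : Matrix (Fin m) (Fin m) ℝ :=
  Matrix.diagonal (fun j => if (j : ℕ) < i then (1 : ℝ) else 0)

open Matrix

namespace Matrix

variable {n R : Type*} [Fintype n] [DecidableEq n] [CommRing R]

theorem mul_one_sub_vecMulVec_single_add_of_mulVec_single_eq_zero {M : Matrix n n R} {k : n}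
    (hM : M *ᵥ Pi.single k 1 = 0) (w : n → R) :
    M * (1 - vecMulVec (Pi.single k 1) (Pi.single k 1) + vecMulVec w (Pi.single k 1))
      = M * (1 + vecMulVec w (Pi.single k 1)) := by
  rw [mul_add, mul_sub, mul_vecMulVec, hM, zero_vecMulVec, sub_zero, mul_add]

theorem mul_one_add_vecMulVec_single_mulVec_single (M : Matrix n n R) (w : n → R) {j k : n}
    (hjk : j ≠ k) :
    (M * (1 + vecMulVec w (Pi.single k 1))) *ᵥ Pi.single j 1 = M *ᵥ Pi.single j 1 := by
  rw [← mulVec_mulVec, add_mulVec, one_mulVec, vecMulVec_mulVec, single_dotProduct,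
    Pi.single_eq_of_ne hjk.symm, mul_zero, MulOpposite.op_zero, zero_smul, add_zero]

theorem mul_prod_one_sub_vecMulVec_single_add_eq (d : n → n → R) :
    ∀ (l : List n), l.Nodup → ∀ M : Matrix n n R, (∀ j ∈ l, M *ᵥ Pi.single j 1 = 0) →
      M * (l.map fun k =>
          1 - vecMulVec (Pi.single k 1) (Pi.single k 1) + vecMulVec (d k) (Pi.single k 1)).prod
        = M * (l.map fun k => 1 + vecMulVec (d k) (Pi.single k 1)).prod
  | [], _, _, _ => rfl
  | k :: l, hl, M, hM => by
    obtain ⟨hk, hl⟩ := List.nodup_cons.mp hl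
    simp only [List.map_cons, List.prod_cons, ← Matrix.mul_assoc]
    rw [mul_one_sub_vecMulVec_single_add_of_mulVec_single_eq_zero (hM k List.mem_cons_self)]
    refine mul_prod_one_sub_vecMulVec_single_add_eq d l hl _ fun j hj => ?_
    rw [mul_one_add_vecMulVec_single_mulVec_single _ _ (ne_of_mem_of_not_mem hj hk),
      hM j (List.mem_cons_of_mem k hj)]

end Matrix

theorem outerProd_eq_vecMulVec {m : ℕ} (u v : Fin m → ℝ) : outerProd u v = vecMulVec u v :=
  rfl

theorem canonBasis_eq_single {m : ℕ} (k : Fin m) : canonBasis k = Pi.single k 1 := by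
  ext j
  simp [canonBasis, Pi.single_apply]

theorem projMat_mulVec_canonBasis {m i : ℕ} {j : Fin m} (hij : i ≤ j) :
    projMat m i *ᵥ canonBasis j = 0 := by
  rw [projMat, canonBasis_eq_single, diagonal_mulVec_single, if_neg (by omega),
    zero_mul, Pi.single_zero]

theorem le_of_mem_drop_finRange {m i : ℕ} {j : Fin m} (h : j ∈ (List.finRange m).drop i) :
    i ≤ j := by
  obtain ⟨t, ht, rfl⟩ := List.mem_iff_getElem.mp h
  simp

theorem backprop_algebra_downward_general (m : ℕ)
    (d : Fin m → (Fin m → ℝ)) (i : ℕ) :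
    projMat m i *
      (((List.finRange m).drop i).map
        (fun k => (1 : Matrix (Fin m) (Fin m) ℝ)
          - outerProd (canonBasis k) (canonBasis k) + outerProd (d k) (canonBasis k))).prod
    = projMat m i *
      (((List.finRange m).drop i).map
        (fun k => (1 : Matrix (Fin m) (Fin m) ℝ) + outerProd (d k) (canonBasis k))).prod := by
  have hker : ∀ j ∈ (List.finRange m).drop i, projMat m i *ᵥ Pi.single j 1 = 0 := fun j hj => by
    rw [← canonBasis_eq_single]
    exact projMat_mulVec_canonBasis (le_of_mem_drop_finRange hj)
  simp only [outerProd_eq_vecMulVec, canonBasis_eq_single]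
  exact Matrix.mul_prod_one_sub_vecMulVec_single_add_eq d _
    ((List.nodup_finRange m).sublist (List.drop_sublist i _)) _ hker

/-- For each `i ∈ {p, …, m-1}` (so that, 0-based, the factors run over `k = i, …, m-1`,
i.e. `e_{i+1}, …, e_m` in 1-based notation):
`P_i (I - e_{i+1}e_{i+1}ᵀ + d_{i+1}e_{i+1}ᵀ) ⋯ (I - e_m e_mᵀ + d_m e_mᵀ)
  = P_i (I + d_{i+1}e_{i+1}ᵀ) ⋯ (I + d_m e_mᵀ)`. -/
theorem backprop_algebra_downward (p m : ℕ) (hp : 0 < p) (hpm : p < m)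
    (d : Fin m → (Fin m → ℝ)) (i : ℕ) (hip : p ≤ i) (him : i < m) :
    projMat m i *
      (((List.finRange m).drop i).map
        (fun k => (1 : Matrix (Fin m) (Fin m) ℝ)
          - outerProd (canonBasis k) (canonBasis k) + outerProd (d k) (canonBasis k))).prod
    = projMat m i *
      (((List.finRange m).drop i).map
        (fun k => (1 : Matrix (Fin m) (Fin m) ℝ) + outerProd (d k) (canonBasis k))).prod :=
  backprop_algebra_downward_general m d i
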